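/- Let n ≥ 1, let k = (k_1, …, k_n) be a regular tuple of integers, and let h denote the 2n×2n permutation matrix swapping the n-th and 2n-th standard basis vectors and fixing all others. Suppose J ∈ GO_{2n}(ℂ) satisfies (Jh) D_k(w) (Jh)^{−1} = D_k(w)^{−1} for every w ∈ ℂ× and (Jh)² = −1. Then ν(J) = −1 and det J = −1; consequently J lies in GSO_{2n}(ℂ) if and only if n is odd. -/

import Mathlib

open Matrix

noncomputable section

/-- 2n×2n matrices, indexed by `Fin n ⊕ Fin n`. -/
abbrev Mat (n : ℕ) (k : Type*) := Matrix (Fin n ⊕ Fin n) (Fin n ⊕ Fin n) k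

/-- The standard split symmetric form matrix `Q_{2n} = [[0, 1], [1, 0]]`. -/
def Qmat (n : ℕ) : Mat n ℂ := fromBlocks 0 1 1 0

/-- `A ∈ GO_{2n}(ℂ)` with multiplier `ν`. -/
def inGO (n : ℕ) (A : Mat n ℂ) (ν : ℂ) : Prop :=
  IsUnit A.det ∧ ν ≠ 0 ∧ Aᵀ * Qmat n * A = ν • Qmat n

/-- `A ∈ GSO_{2n}(ℂ)` with multiplier `ν`: in `GO_{2n}` and `det A = ν ^ n`. -/
def inGSO (n : ℕ) (A : Mat n ℂ) (ν : ℂ) : Prop :=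
  inGO n A ν ∧ A.det = ν ^ n

/-- `D_k(w) = diag(w^{k_1}, …, w^{k_n}, w^{-k_1}, …, w^{-k_n})`. -/
def Dk {n : ℕ} (kk : Fin n → ℤ) (w : ℂ) : Mat n ℂ :=
  Matrix.diagonal (Sum.elim (fun i => w ^ kk i) (fun i => w ^ (-kk i)))

/-- A tuple `(k_1, …, k_n)` of integers is regular if each `k_i` is nonzero and
`k_i ≠ ±k_j` for all `i ≠ j`. -/
def Regular {n : ℕ} (kk : Fin n → ℤ) : Prop :=
  (∀ i, kk i ≠ 0) ∧ ∀ i j, i ≠ j → kk i ≠ kk j ∧ kk i ≠ -kk j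

/-- The 2n×2n permutation matrix swapping the n-th and 2n-th standard basis vectors
(i.e. the basis vectors indexed by `Sum.inl (n-1)` and `Sum.inr (n-1)`) and fixing
all others. -/
def hmat (n : ℕ) (hn : 0 < n) : Mat n ℂ :=
  Matrix.of fun i j =>
    if j = Equiv.swap (Sum.inl (⟨n - 1, by omega⟩ : Fin n))
        (Sum.inr (⟨n - 1, by omega⟩ : Fin n)) i then 1 else 0

/-! Put `M = J h`. Since `M` conjugates `D_k(w)` to its inverse, it maps the `w^{k_q}`-eigenline
onto the `w^{-k_q}`-eigenline, and regularity of `k` leaves only the positions `(i, n+i)` and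
`(n+i, i)` for its nonzero entries, i.e. `M = D Q` with `D` diagonal. Then `Mᵀ = Q M Q`, so
`Mᵀ Q M = Q M² = -Q`; as `h` preserves `Q`, the multiplier of `J` is that of `M`, namely `-1`.
Moreover `M² = -1` says that the entries of `D` paired by `Q` multiply to `-1`, so
`det M = det D · det Q = (-1)^n (-1)^n = 1` and `det J = det M · det h = -1`. -/

section SwapSupported

variable {α R : Type*}

def SwapSupported [Zero R] (M : Matrix (α ⊕ α) (α ⊕ α) R) : Prop :=
  ∀ p q, q ≠ p.swap → M p q = 0

variable [Fintype α] [DecidableEq α]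

variable (α R) in
def swapPermMatrix [Zero R] [One R] : Matrix (α ⊕ α) (α ⊕ α) R :=
  Equiv.Perm.permMatrix R (Equiv.sumComm α α)

section NonAssocSemiring

variable [NonAssocSemiring R]

lemma swapPermMatrix_mul (A : Matrix (α ⊕ α) (α ⊕ α) R) :
    swapPermMatrix α R * A = A.submatrix Sum.swap id :=
  PEquiv.toMatrix_toPEquiv_mul (Equiv.sumComm α α) A

lemma mul_swapPermMatrix (A : Matrix (α ⊕ α) (α ⊕ α) R) :
    A * swapPermMatrix α R = A.submatrix id Sum.swap :=
  PEquiv.mul_toMatrix_toPEquiv A (Equiv.sumComm α α)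

lemma swapPermMatrix_mul_self : swapPermMatrix α R * swapPermMatrix α R = 1 := by
  rw [swapPermMatrix, ← permMatrix_mul,
    show Equiv.sumComm α α * Equiv.sumComm α α = 1 from Equiv.ext Sum.swap_swap, permMatrix_one]

end NonAssocSemiring

lemma sign_sumComm_self :
    Equiv.Perm.sign (Equiv.sumComm α α) = (-1) ^ Fintype.card α := by
  rw [← Equiv.Perm.sign_eq_sign_of_equiv
    (Equiv.prodCongrLeft fun _ : α => Equiv.swap true false) _ (Equiv.boolProdEquivSum α)]
  · simp [Equiv.Perm.sign_prodCongrLeft]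
  · rintro ⟨b, a⟩
    cases b <;> simp [Equiv.boolProdEquivSum, Equiv.prodCongrLeft, Equiv.swap_apply_def]

lemma det_swapPermMatrix [CommRing R] : (swapPermMatrix α R).det = (-1) ^ Fintype.card α := by
  rw [swapPermMatrix, det_permutation, sign_sumComm_self]
  push_cast
  rfl

namespace SwapSupported

variable {M : Matrix (α ⊕ α) (α ⊕ α) R}

lemma transpose_eq [NonAssocSemiring R] (hM : SwapSupported M) :
    Mᵀ = swapPermMatrix α R * M * swapPermMatrix α R := by
  rw [swapPermMatrix_mul, mul_swapPermMatrix]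
  ext p q
  simp only [transpose_apply, submatrix_apply, id_eq]
  by_cases h : q = p.swap
  · subst h; simp
  · rw [hM q p fun h' => h (by simp [h']),
      hM p.swap q.swap fun h' => h (Sum.swap_leftInverse.injective h')]

lemma mul_swapPermMatrix_eq_diagonal [NonAssocSemiring R] (hM : SwapSupported M) :
    M * swapPermMatrix α R = diagonal fun p => M p p.swap := by
  rw [mul_swapPermMatrix]
  ext p q
  by_cases h : p = q
  · subst h; simp
  · rw [submatrix_apply, id_eq, diagonal_apply_ne _ h,
      hM p q.swap fun h' => h (Sum.swap_leftInverse.injective h').symm]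

lemma apply_swap_mul_apply_swap [NonAssocRing R] (hM : SwapSupported M) (hsq : M * M = -1)
    (p : α ⊕ α) : M p p.swap * M p.swap p = -1 := by
  have h := congr_fun₂ hsq p p
  rw [mul_apply, Fintype.sum_eq_single p.swap fun q hq => by rw [hM p q hq, zero_mul]] at h
  simpa using h

lemma transpose_mul_mul_self [Ring R] (hM : SwapSupported M) (hsq : M * M = -1) :
    Mᵀ * swapPermMatrix α R * M = -swapPermMatrix α R := by
  rw [hM.transpose_eq, mul_assoc (_ * M), swapPermMatrix_mul_self, mul_one,
    mul_assoc, hsq, mul_neg, mul_one]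

lemma det_eq_one [CommRing R] (hM : SwapSupported M) (hsq : M * M = -1) : M.det = 1 := by
  have hprod : ∏ p, M p p.swap = (-1) ^ Fintype.card α := by
    rw [Fintype.prod_sum_type, ← Finset.prod_mul_distrib]
    exact (Finset.prod_congr rfl fun i _ => hM.apply_swap_mul_apply_swap hsq (Sum.inl i)).trans
      (by simp)
  calc M.det = (M * swapPermMatrix α R * swapPermMatrix α R).det := by
        rw [mul_assoc, swapPermMatrix_mul_self, mul_one]
    _ = (-1) ^ Fintype.card α * (-1) ^ Fintype.card α := by
        rw [det_mul, hM.mul_swapPermMatrix_eq_diagonal, det_diagonal, hprod, det_swapPermMatrix]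
    _ = 1 := by rw [← mul_pow, neg_one_mul, neg_neg, one_pow]

end SwapSupported

end SwapSupported

lemma Matrix.eq_of_mul_diagonal_eq_diagonal_mul {m n R : Type*} [Fintype m] [Fintype n]
    [DecidableEq m] [DecidableEq n] [CommSemiring R] [IsCancelMulZero R]
    {M : Matrix m n R} {d : n → R} {d' : m → R} (h : M * diagonal d = diagonal d' * M)
    {p : m} {q : n} (hpq : M p q ≠ 0) : d q = d' p := by
  have h' := congr_fun₂ h p q
  rw [mul_diagonal, diagonal_mul, mul_comm] at h'
  exact mul_right_cancel₀ hpq h'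

lemma Complex.two_zpow_injective : Function.Injective fun a : ℤ => (2 : ℂ) ^ a := by
  intro a b (h : (2 : ℂ) ^ a = 2 ^ b)
  have h' : (((2 : ℝ) ^ a : ℝ) : ℂ) = (((2 : ℝ) ^ b : ℝ) : ℂ) := by push_cast; exact h
  exact zpow_right_injective₀ two_pos (by norm_num) (Complex.ofReal_injective h')

section Weights

variable {n : ℕ} (kk : Fin n → ℤ)

def kWeight : Fin n ⊕ Fin n → ℤ :=
  Sum.elim kk fun i => -kk i

lemma Dk_eq_diagonal_kWeight (w : ℂ) : Dk kk w = diagonal fun p => w ^ kWeight kk p := by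
  rw [Dk]
  congr 1
  ext (i | i) <;> rfl

lemma inv_Dk {w : ℂ} (hw : w ≠ 0) : (Dk kk w)⁻¹ = diagonal fun p => w ^ (-kWeight kk p) := by
  refine inv_eq_left_inv ?_
  rw [Dk_eq_diagonal_kWeight, diagonal_mul_diagonal, ← diagonal_one]
  congr 1
  ext p
  rw [← zpow_add₀ hw, neg_add_cancel, zpow_zero]

variable {kk}

lemma Regular.eq_swap_of_kWeight_eq_neg (hreg : Regular kk) {p q : Fin n ⊕ Fin n}
    (h : kWeight kk q = -kWeight kk p) : q = p.swap := by
  obtain ⟨hne, hpm⟩ := hreg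
  rcases p with i | i <;> rcases q with j | j <;>
    simp only [kWeight, Sum.elim_inl, Sum.elim_inr, neg_neg, Sum.swap_inl, Sum.swap_inr,
      reduceCtorEq, Sum.inl.injEq, Sum.inr.injEq] at h ⊢
  all_goals
    rcases eq_or_ne j i with rfl | hij
    · first | rfl | (have := hne j; omega)
    · have := hpm j i hij; omega

/-- Since `2` is not a root of unity, the single value `w = 2` already separates the weights. -/
lemma swapSupported_of_conj_Dk_two_eq_inv (hreg : Regular kk) {M : Mat n ℂ} (hM : IsUnit M.det)
    (h : M * Dk kk 2 * M⁻¹ = (Dk kk 2)⁻¹) : SwapSupported M := by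
  have hcomm : M * Dk kk 2 = (Dk kk 2)⁻¹ * M := by
    rw [← h, nonsing_inv_mul_cancel_right _ _ hM]
  rw [inv_Dk kk two_ne_zero, Dk_eq_diagonal_kWeight] at hcomm
  intro p q hpq
  by_contra hne
  exact hpq (hreg.eq_swap_of_kWeight_eq_neg
    (Complex.two_zpow_injective (eq_of_mul_diagonal_eq_diagonal_mul hcomm hne)))

end Weights

lemma Equiv.commute_swap_inl_inr_sumComm {α : Type*} [DecidableEq α] (a : α) :
    Commute (Equiv.swap (Sum.inl a) (Sum.inr a)) (Equiv.sumComm α α) := by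
  have h := Equiv.swap_apply_apply (Equiv.sumComm α α) (Sum.inl a) (Sum.inr a)
  rw [Equiv.sumComm_apply, Sum.swap_inl, Sum.swap_inr, Equiv.swap_comm] at h
  exact eq_mul_inv_iff_mul_eq.mp h

lemma Qmat_eq_swapPermMatrix (n : ℕ) : Qmat n = swapPermMatrix (Fin n) ℂ := by
  ext (i | i) (j | j) <;>
    simp [Qmat, swapPermMatrix, Equiv.Perm.permMatrix, PEquiv.toMatrix_apply, one_apply, eq_comm]

lemma Qmat_ne_zero {n : ℕ} (hn : 0 < n) : Qmat n ≠ 0 := fun h => by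
  simpa [Qmat] using congr_fun₂ h (Sum.inl ⟨0, hn⟩) (Sum.inr ⟨0, hn⟩)

section Hmat

variable {n : ℕ} (hn : 0 < n)

def hPerm : Equiv.Perm (Fin n ⊕ Fin n) :=
  Equiv.swap (Sum.inl ⟨n - 1, by omega⟩) (Sum.inr ⟨n - 1, by omega⟩)

lemma hmat_eq_permMatrix : hmat n hn = (hPerm hn).permMatrix ℂ := by
  ext i j
  simp [hmat, hPerm, Equiv.Perm.permMatrix, PEquiv.toMatrix_apply, eq_comm]

lemma hmat_mul_self : hmat n hn * hmat n hn = 1 := by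
  rw [hmat_eq_permMatrix, ← permMatrix_mul, hPerm, Equiv.swap_mul_self, permMatrix_one]

lemma det_hmat : (hmat n hn).det = -1 := by
  rw [hmat_eq_permMatrix, det_permutation, hPerm, Equiv.Perm.sign_swap (by simp)]
  simp

lemma hmat_transpose_mul_Qmat_mul_hmat : (hmat n hn)ᵀ * Qmat n * hmat n hn = Qmat n := by
  rw [hmat_eq_permMatrix, transpose_permMatrix, Qmat_eq_swapPermMatrix, swapPermMatrix,
    ← permMatrix_mul, ← permMatrix_mul, ← mul_assoc,
    hPerm, (Equiv.commute_swap_inl_inr_sumComm _).mul_inv_cancel]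

end Hmat

/-- If `J ∈ GO_{2n}(ℂ)` with `(Jh) D_k(w) (Jh)⁻¹ = D_k(w)⁻¹` for all `w ∈ ℂ×` and
`(Jh)² = -1`, then `ν(J) = -1` and `det J = -1`; hence `J ∈ GSO_{2n}(ℂ)` iff
`n` is odd. -/
theorem go_h_antiinvolution (n : ℕ) (hn : 0 < n) (kk : Fin n → ℤ) (hreg : Regular kk)
    (J : Mat n ℂ) (ν : ℂ) (hJ : inGO n J ν)
    (hconj : ∀ w : ℂ, w ≠ 0 →
      (J * hmat n hn) * Dk kk w * (J * hmat n hn)⁻¹ = (Dk kk w)⁻¹)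
    (hsq : (J * hmat n hn) * (J * hmat n hn) = -1) :
    ν = -1 ∧ J.det = -1 ∧ (inGSO n J ν ↔ Odd n) := by
  obtain ⟨hJunit, hν0, hQ⟩ := hJ
  set M := J * hmat n hn with hM
  have hJM : J = M * hmat n hn := by rw [hM, mul_assoc, hmat_mul_self, mul_one]
  have hMunit : IsUnit M.det :=
    isUnit_det_of_right_inverse (B := -M) (by rw [mul_neg, hsq, neg_neg])
  have hsupp : SwapSupported M :=
    swapSupported_of_conj_Dk_two_eq_inv hreg hMunit (hconj 2 two_ne_zero)
  have hν : ν = -1 := by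
    have hνQ : ν • Qmat n = (-1 : ℂ) • Qmat n := calc
      ν • Qmat n = (hmat n hn)ᵀ * (Jᵀ * Qmat n * J) * hmat n hn := by
        rw [hQ, Matrix.mul_smul, Matrix.smul_mul, hmat_transpose_mul_Qmat_mul_hmat]
      _ = Mᵀ * Qmat n * M := by simp only [hM, transpose_mul, mul_assoc]
      _ = (-1 : ℂ) • Qmat n := by
        rw [Qmat_eq_swapPermMatrix, hsupp.transpose_mul_mul_self hsq, neg_one_smul]
    exact smul_left_injective ℂ (Qmat_ne_zero hn) hνQ
  have hdet : J.det = -1 := by rw [hJM, det_mul, hsupp.det_eq_one hsq, det_hmat, one_mul]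
  refine ⟨hν, hdet, ?_⟩
  rw [inGSO, and_iff_right ⟨hJunit, hν0, hQ⟩, hdet, hν, eq_comm,
    neg_one_pow_eq_neg_one_iff_odd (by norm_num)]
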